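/- For every real x > 0, −2π Σ_{n=1}^∞ (−1)^n n^2 e^{−π n^2 x} = (1/(2 x^{5/2})) · Σ_{n=0}^∞ ((2n+1)^2 π − 2x) · e^{−(π/(4x))(2n+1)^2}, both series being absolutely convergent. -/

import Mathlib

/-!
Poisson summation (Jacobi's transformation) gives
`∑_{n ∈ ℤ} (-1)^n e^{-π n² x} = x^{-1/2} ∑_{n ∈ ℤ} e^{-π (n + 1/2)² / x}`.
Both sides are Laplace-type sums `∑ ε_n e^{-λ_n s}` with `|ε_n| ≤ 1`, which may be
differentiated termwise; comparing the derivatives at `x` and folding the sums over `ℤ`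
onto `ℕ` (via `n ↦ -n` on the left and `n ↦ -n - 1` on the right) gives the identity.
-/

open Real Filter Topology

lemma mul_exp_neg_mul_le (l : ℝ) {t : ℝ} (ht : 0 < t) :
    l * exp (-l * t) ≤ 2 / t * exp (-l * (t / 2)) := by
  have hl : l ≤ 2 / t * exp (l * (t / 2)) := by
    rw [div_mul_eq_mul_div, le_div_iff₀ ht]
    nlinarith [add_one_le_exp (l * (t / 2))]
  calc l * exp (-l * t) ≤ 2 / t * exp (l * (t / 2)) * exp (-l * t) := by gcongr
    _ = 2 / t * exp (-l * (t / 2)) := by rw [mul_assoc, ← exp_add]; ring_nf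

section ExpSum

variable {ι : Type*} {l : ι → ℝ} {ε : ι → ℝ}

lemma summable_mul_exp_neg_mul (hl : ∀ i, 0 ≤ l i)
    (hs : ∀ t > 0, Summable fun i ↦ exp (-l i * t)) {t : ℝ} (ht : 0 < t) :
    Summable fun i ↦ l i * exp (-l i * t) :=
  ((hs (t / 2) (by positivity)).mul_left (2 / t)).of_nonneg_of_le
    (fun i ↦ mul_nonneg (hl i) (exp_pos _).le) fun i ↦ mul_exp_neg_mul_le (l i) ht

lemma summable_neg_mul_mul_exp_neg_mul (hε : ∀ i, |ε i| ≤ 1) (hl : ∀ i, 0 ≤ l i)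
    (hs : ∀ t > 0, Summable fun i ↦ exp (-l i * t)) {t : ℝ} (ht : 0 < t) :
    Summable fun i ↦ -l i * (ε i * exp (-l i * t)) :=
  (summable_mul_exp_neg_mul hl hs ht).of_norm_bounded fun i ↦ by
    rw [norm_mul, norm_mul, norm_neg, Real.norm_of_nonneg (hl i), Real.norm_eq_abs,
      Real.norm_of_nonneg (exp_pos _).le]
    exact mul_le_mul_of_nonneg_left (mul_le_of_le_one_left (exp_pos _).le (hε i)) (hl i)

lemma hasDerivAt_tsum_mul_exp_neg_mul (hε : ∀ i, |ε i| ≤ 1) (hl : ∀ i, 0 ≤ l i)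
    (hs : ∀ t > 0, Summable fun i ↦ exp (-l i * t)) {t : ℝ} (ht : 0 < t) :
    HasDerivAt (fun s ↦ ∑' i, ε i * exp (-l i * s))
      (∑' i, -l i * (ε i * exp (-l i * t))) t := by
  refine hasDerivAt_tsum_of_isPreconnected (g := fun i s ↦ ε i * exp (-l i * s))
    (g' := fun i s ↦ -l i * (ε i * exp (-l i * s)))
    (summable_mul_exp_neg_mul hl hs (half_pos ht)) isOpen_Ioi isPreconnected_Ioi
    (fun i s _ ↦ ?_) (fun i s hst ↦ ?_) (Set.mem_Ioi.2 (half_lt_self ht))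
    ((hs t ht).of_norm_bounded fun i ↦ ?_) (Set.mem_Ioi.2 (half_lt_self ht))
  · exact (((hasDerivAt_id' s).const_mul (-l i)).exp.const_mul (ε i)).congr_deriv (by ring)
  · rw [norm_mul, norm_mul, norm_neg, Real.norm_of_nonneg (hl i), Real.norm_eq_abs,
      Real.norm_eq_abs, Real.abs_exp]
    have : exp (-l i * s) ≤ exp (-l i * (t / 2)) :=
      exp_le_exp.2 (by nlinarith [hl i, Set.mem_Ioi.1 hst])
    calc l i * (|ε i| * exp (-l i * s)) ≤ l i * (1 * exp (-l i * (t / 2))) := by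
          have := hl i; have := hε i; gcongr
      _ = _ := by ring
  · rw [norm_mul, Real.norm_eq_abs, Real.norm_eq_abs, Real.abs_exp]
    exact mul_le_of_le_one_left (exp_pos _).le (hε i)

end ExpSum

lemma summable_exp_neg_pi_mul_add_sq (a : ℝ) {t : ℝ} (ht : 0 < t) :
    Summable fun n : ℤ ↦ exp (-(π * (n + a) ^ 2) * t) := by
  have h := ((summable_jacobiTheta₂_term_iff (Complex.I * (a * t)) (Complex.I * t)).2
    (by simpa using ht)).norm.mul_left (exp (-(π * a ^ 2 * t)))
  refine h.congr fun n ↦ ?_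
  rw [norm_jacobiTheta₂_term, ← exp_add]
  simp only [Complex.mul_im, Complex.mul_re, Complex.I_re, Complex.I_im, Complex.ofReal_re,
    Complex.ofReal_im]
  ring_nf

lemma tsum_neg_one_zpow_mul_exp_neg_pi_mul_sq {x : ℝ} (hx : 0 < x) :
    ∑' n : ℤ, (-1 : ℝ) ^ n * exp (-(π * n ^ 2) * x) =
      x ^ (-(1 / 2) : ℝ) * ∑' n : ℤ, exp (-(π * (n + 1 / 2) ^ 2) * x⁻¹) := by
  open Complex in
  -- with `b = -i/2` the twist `e^{2πibn}` is `(-1)^n` and the dual sum is shifted by `1/2`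
  have key := tsum_exp_neg_quadratic (a := (x : ℂ)) (by simpa using hx) (-I / 2)
  have hl (n : ℤ) : cexp (-π * x * n ^ 2 + 2 * π * (-I / 2) * n) =
      (((-1 : ℝ) ^ n * rexp (-(π * n ^ 2) * x) : ℝ) : ℂ) := by
    rw [show -π * x * n ^ 2 + 2 * π * (-I / 2) * n =
      ((-(π * n ^ 2) * x : ℝ) : ℂ) + n * (-(π * I)) by push_cast; ring,
      Complex.exp_add, exp_int_mul, exp_neg_pi_mul_I, ← ofReal_exp]
    push_cast; ring
  have hr (n : ℤ) : cexp (-π / x * (n + I * (-I / 2)) ^ 2) =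
      ((rexp (-(π * (n + 1 / 2) ^ 2) * x⁻¹) : ℝ) : ℂ) := by
    rw [ofReal_exp]
    congr 1
    rw [show I * (-I / 2) = 1 / 2 by ring_nf; rw [I_sq]; ring]
    push_cast
    ring
  have hpow : 1 / (x : ℂ) ^ (1 / 2 : ℂ) = ((x ^ (-(1 / 2) : ℝ) : ℝ) : ℂ) := by
    rw [ofReal_cpow hx.le, ofReal_neg, cpow_neg, one_div]
    norm_num
  rw [tsum_congr hl, tsum_congr hr, ← ofReal_tsum, ← ofReal_tsum, hpow, ← ofReal_mul] at key
  exact_mod_cast key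

section IntSum

variable {M : Type*} [AddCommMonoid M] [TopologicalSpace M] [ContinuousAdd M] [T2Space M]
  {f : ℤ → M}

lemma tsum_int_eq_two_nsmul_tsum_nat (hf : ∀ n : ℕ, f (-(n + 1)) = f n)
    (hs : Summable fun n : ℕ ↦ f n) : ∑' n, f n = 2 • ∑' n : ℕ, f n := by
  rw [tsum_of_nat_of_neg_add_one hs (by simpa only [hf] using hs), two_nsmul]
  simp only [hf]

lemma tsum_int_eq_two_nsmul_tsum_nat_add_one (hf : ∀ n : ℕ, f (-(n + 1)) = f (n + 1))
    (h0 : f 0 = 0) (hs : Summable fun n : ℕ ↦ f (n + 1)) :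
    ∑' n, f n = 2 • ∑' n : ℕ, f (n + 1) := by
  rw [tsum_of_add_one_of_neg_add_one hs (by simpa only [hf] using hs), h0, add_zero, two_nsmul]
  simp only [hf]

lemma tsum_int_add_half_eq_two_nsmul_tsum_nat {φ : ℝ → M} (hφ : ∀ t, φ (-t) = φ t)
    (hs : Summable fun n : ℕ ↦ φ (n + 1 / 2)) :
    ∑' n : ℤ, φ (n + 1 / 2) = 2 • ∑' n : ℕ, φ (n + 1 / 2) := by
  refine tsum_int_eq_two_nsmul_tsum_nat (f := fun n : ℤ ↦ φ (n + 1 / 2)) (fun n ↦ ?_)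
    (by simpa only [Int.cast_natCast] using hs)
  rw [← hφ]
  push_cast
  ring_nf

end IntSum

lemma summable_exp_neg_pi_mul_sq {t : ℝ} (ht : 0 < t) :
    Summable fun n : ℤ ↦ exp (-(π * n ^ 2) * t) := by
  simpa using summable_exp_neg_pi_mul_add_sq 0 ht

lemma neg_pi_mul_add_half_sq_mul_inv (t x : ℝ) :
    -(π * (t + 1 / 2) ^ 2) * x⁻¹ = -(π / (4 * x)) * (2 * t + 1) ^ 2 := by
  ring

lemma summable_exp_neg_pi_div_mul_sq_odd {x : ℝ} (hx : 0 < x) :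
    Summable fun n : ℕ ↦ exp (-(π / (4 * x)) * (2 * (n : ℝ) + 1) ^ 2) := by
  simpa only [Function.comp_def, Int.cast_natCast, neg_pi_mul_add_half_sq_mul_inv] using
    (summable_exp_neg_pi_mul_add_sq (1 / 2) (inv_pos.2 hx)).comp_injective Nat.cast_injective

lemma summable_sq_odd_mul_exp_neg_pi_div_mul_sq_odd {x : ℝ} (hx : 0 < x) :
    Summable fun n : ℕ ↦
      (2 * (n : ℝ) + 1) ^ 2 * π * exp (-(π / (4 * x)) * (2 * (n : ℝ) + 1) ^ 2) := by
  have h := ((summable_mul_exp_neg_mul (l := fun n : ℤ ↦ π * (n + 1 / 2) ^ 2)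
    (fun n ↦ by positivity) (fun t ↦ summable_exp_neg_pi_mul_add_sq (1 / 2))
    (inv_pos.2 hx)).comp_injective Nat.cast_injective).mul_left 4
  refine h.congr fun n ↦ ?_
  simp only [Function.comp_apply, Int.cast_natCast, neg_pi_mul_add_half_sq_mul_inv]
  ring

lemma tsum_exp_neg_pi_mul_add_half_sq {x : ℝ} (hx : 0 < x) :
    ∑' n : ℤ, exp (-(π * (n + 1 / 2) ^ 2) * x⁻¹) =
      2 * ∑' n : ℕ, exp (-(π / (4 * x)) * (2 * (n : ℝ) + 1) ^ 2) := by
  rw [tsum_int_add_half_eq_two_nsmul_tsum_nat (φ := fun t ↦ exp (-(π * t ^ 2) * x⁻¹))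
    (fun t ↦ by rw [neg_sq])
    (by simpa only [neg_pi_mul_add_half_sq_mul_inv] using summable_exp_neg_pi_div_mul_sq_odd hx),
    nsmul_eq_mul, Nat.cast_ofNat]
  simp only [neg_pi_mul_add_half_sq_mul_inv]

lemma hasDerivAt_tsum_exp_neg_pi_mul_add_half_sq_inv {x : ℝ} (hx : 0 < x) :
    HasDerivAt (fun s ↦ ∑' n : ℤ, exp (-(π * (n + 1 / 2) ^ 2) * s⁻¹))
      ((∑' n : ℕ, (2 * (n : ℝ) + 1) ^ 2 * π *
          exp (-(π / (4 * x)) * (2 * (n : ℝ) + 1) ^ 2)) / (2 * x ^ 2)) x := by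
  have hG := hasDerivAt_tsum_mul_exp_neg_mul (ε := fun _ ↦ (1 : ℝ))
    (l := fun n : ℤ ↦ π * (n + 1 / 2) ^ 2) (by simp) (fun n ↦ by positivity)
    (fun t ↦ summable_exp_neg_pi_mul_add_sq (1 / 2)) (inv_pos.2 hx)
  simp only [one_mul] at hG
  have hterm (n : ℕ) :
      -(π * ((n : ℝ) + 1 / 2) ^ 2) * exp (-(π * ((n : ℝ) + 1 / 2) ^ 2) * x⁻¹) =
      -(1 / 4) *
        ((2 * (n : ℝ) + 1) ^ 2 * π * exp (-(π / (4 * x)) * (2 * (n : ℝ) + 1) ^ 2)) := by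
    rw [neg_pi_mul_add_half_sq_mul_inv]
    ring
  refine (hG.comp x (hasDerivAt_inv hx.ne')).congr_deriv ?_
  rw [tsum_int_add_half_eq_two_nsmul_tsum_nat
    (φ := fun t ↦ -(π * t ^ 2) * exp (-(π * t ^ 2) * x⁻¹)) (fun t ↦ by rw [neg_sq])
    (((summable_sq_odd_mul_exp_neg_pi_div_mul_sq_odd hx).mul_left _).congr
      fun n ↦ (hterm n).symm),
    nsmul_eq_mul, Nat.cast_ofNat, tsum_congr hterm, tsum_mul_left]
  ring

lemma neg_pi_mul_sq_mul_neg_one_zpow_mul_exp (x : ℝ) (n : ℕ) :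
    -(π * ((n + 1 : ℤ) : ℝ) ^ 2) * ((-1 : ℝ) ^ ((n : ℤ) + 1) *
      exp (-(π * ((n + 1 : ℤ) : ℝ) ^ 2) * x)) =
    -π * ((-1 : ℝ) ^ (n + 1) * ((n : ℝ) + 1) ^ 2 * exp (-π * ((n : ℝ) + 1) ^ 2 * x)) := by
  rw [show (n : ℤ) + 1 = ((n + 1 : ℕ) : ℤ) by push_cast; rfl, zpow_natCast]
  push_cast
  ring_nf

lemma summable_neg_one_pow_mul_sq_mul_exp_neg_pi_mul_sq {x : ℝ} (hx : 0 < x) :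
    Summable fun n : ℕ ↦ (-1 : ℝ) ^ (n + 1) * ((n : ℝ) + 1) ^ 2 *
      exp (-π * ((n : ℝ) + 1) ^ 2 * x) := by
  have h : Summable fun n : ℤ ↦
      -(π * (n : ℝ) ^ 2) * ((-1 : ℝ) ^ n * exp (-(π * n ^ 2) * x)) :=
    summable_neg_mul_mul_exp_neg_mul (fun n ↦ by rw [abs_neg_one_zpow]) (fun n ↦ by positivity)
      (fun t ↦ summable_exp_neg_pi_mul_sq) hx
  rw [← summable_mul_left_iff (neg_ne_zero.2 pi_ne_zero)]
  simpa only [Function.comp_def, Int.cast_natCast, Nat.cast_add, Nat.cast_one,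
      neg_pi_mul_sq_mul_neg_one_zpow_mul_exp] using
    h.comp_injective (Nat.cast_injective.comp (add_left_injective 1))

lemma hasDerivAt_tsum_neg_one_zpow_mul_exp_neg_pi_mul_sq {x : ℝ} (hx : 0 < x) :
    HasDerivAt (fun s ↦ ∑' n : ℤ, (-1 : ℝ) ^ n * exp (-(π * n ^ 2) * s))
      (-2 * π * ∑' n : ℕ, (-1 : ℝ) ^ (n + 1) * ((n : ℝ) + 1) ^ 2 *
        exp (-π * ((n : ℝ) + 1) ^ 2 * x)) x := by
  refine (hasDerivAt_tsum_mul_exp_neg_mul (fun n ↦ by rw [abs_neg_one_zpow])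
    (fun n ↦ by positivity) (fun t ↦ summable_exp_neg_pi_mul_sq) hx).congr_deriv ?_
  have hs := summable_neg_one_pow_mul_sq_mul_exp_neg_pi_mul_sq hx
  rw [tsum_int_eq_two_nsmul_tsum_nat_add_one
    (f := fun n : ℤ ↦ -(π * (n : ℝ) ^ 2) * ((-1 : ℝ) ^ n * exp (-(π * n ^ 2) * x)))
    (fun n ↦ by simp only [Int.cast_neg, neg_sq, neg_one_zpow_eq_ite, even_neg]) (by simp)
    ((hs.mul_left (-π)).congr fun n ↦ (neg_pi_mul_sq_mul_neg_one_zpow_mul_exp x n).symm),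
    tsum_congr (neg_pi_mul_sq_mul_neg_one_zpow_mul_exp x), tsum_mul_left, nsmul_eq_mul]
  ring

theorem statement1 (x : ℝ) (hx : 0 < x) :
    Summable (fun n : ℕ => (-1 : ℝ) ^ (n + 1) * ((n : ℝ) + 1) ^ 2 *
        Real.exp (-π * ((n : ℝ) + 1) ^ 2 * x)) ∧
    Summable (fun n : ℕ => ((2 * (n : ℝ) + 1) ^ 2 * π - 2 * x) *
        Real.exp (-(π / (4 * x)) * (2 * (n : ℝ) + 1) ^ 2)) ∧
    -2 * π * ∑' n : ℕ, (-1 : ℝ) ^ (n + 1) * ((n : ℝ) + 1) ^ 2 *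
        Real.exp (-π * ((n : ℝ) + 1) ^ 2 * x) =
      (1 / (2 * x ^ ((5 : ℝ) / 2))) *
        ∑' n : ℕ, ((2 * (n : ℝ) + 1) ^ 2 * π - 2 * x) *
          Real.exp (-(π / (4 * x)) * (2 * (n : ℝ) + 1) ^ 2) := by
  have hT := summable_exp_neg_pi_div_mul_sq_odd hx
  have hU := summable_sq_odd_mul_exp_neg_pi_div_mul_sq_odd hx
  refine ⟨summable_neg_one_pow_mul_sq_mul_exp_neg_pi_mul_sq hx,
    (hU.sub (hT.mul_left (2 * x))).congr fun n ↦ by ring, ?_⟩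
  have hθ : (fun s ↦ ∑' n : ℤ, (-1 : ℝ) ^ n * exp (-(π * n ^ 2) * s)) =ᶠ[𝓝 x]
      fun s ↦ s ^ (-(1 / 2) : ℝ) * ∑' n : ℤ, exp (-(π * (n + 1 / 2) ^ 2) * s⁻¹) :=
    (eventually_gt_nhds hx).mono fun s hs ↦ tsum_neg_one_zpow_mul_exp_neg_pi_mul_sq hs
  rw [(hasDerivAt_tsum_neg_one_zpow_mul_exp_neg_pi_mul_sq hx).unique
    (((hasDerivAt_rpow_const (Or.inl hx.ne')).mul
      (hasDerivAt_tsum_exp_neg_pi_mul_add_half_sq_inv hx)).congr_of_eventuallyEq hθ),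
    tsum_exp_neg_pi_mul_add_half_sq hx]
  simp only [sub_mul]
  rw [hU.tsum_sub (hT.mul_left _), tsum_mul_left]
  generalize ∑' n : ℕ, exp (-(π / (4 * x)) * (2 * (n : ℝ) + 1) ^ 2) = T
  generalize ∑' n : ℕ,
    (2 * (n : ℝ) + 1) ^ 2 * π * exp (-(π / (4 * x)) * (2 * (n : ℝ) + 1) ^ 2) = U
  rw [rpow_neg hx.le, show -(1 / 2 : ℝ) - 1 = -(1 / 2 + 1) by ring, rpow_neg hx.le,
    rpow_add hx, rpow_one, show (5 / 2 : ℝ) = 1 / 2 + 2 by norm_num, rpow_add hx, rpow_two]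
  field_simp
  ring
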